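/- Let z¹, ζ¹ : U → ℝⁿ and z², ζ² : V → ℝⁿ be smooth maps on open sets U, V ⊆ ℝⁿ × ℝⁿ satisfying the 1-form relations (z¹_η)ᵀζ¹ = 0 on U and (z²_ξ)ᵀζ² = 0 on V. Let x*, ξ* : U → ℝⁿ and ξ̂ : W → ℝⁿ be smooth with ζ²(x, ξ̂(x;y,η)) = ζ¹(y,η) on W ⊆ ℝⁿ × U, ξ̂(x*(y,η);y,η) = ξ*(y,η), z²(x*(y,η), ξ*(y,η)) = z¹(y,η), and suppose ζ²_ξ is invertible along (x*, ξ*). Define φ(x;y,η) = ⟨z²(x, ξ̂(x;y,η)) − z¹(y,η), ζ¹(y,η)⟩. Then ∇_η φ(x;y,η) = (ζ¹_η(y,η))ᵀ (z²(x, ξ̂(x;y,η)) − z¹(y,η)), and at x = x*(y,η) the Hessian in η satisfies φ_{ηη}(x*(y,η); y, η) = (ζ¹_η(y,η))ᵀ ( z²_ξ(x*,ξ*) (ζ²_ξ(x*,ξ*))⁻¹ ζ¹_η(y,η) − z¹_η(y,η) ). -/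

import Mathlib

open Matrix

/-- The continuous linear map `(u, v) ↦ A u + B v` on `ℝⁿ × ℝⁿ`; a map whose derivative at a
point has this form has Jacobian `A` in the first variable and `B` in the second. -/
noncomputable def jacCLM {n : ℕ} (A B : Matrix (Fin n) (Fin n) ℝ) :
    ((Fin n → ℝ) × (Fin n → ℝ)) →L[ℝ] (Fin n → ℝ) :=
  LinearMap.toContinuousLinearMap
    (A.mulVecLin.comp (LinearMap.fst ℝ (Fin n → ℝ) (Fin n → ℝ)) +
      B.mulVecLin.comp (LinearMap.snd ℝ (Fin n → ℝ) (Fin n → ℝ)))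

/-!
Differentiate `φ = ⟨z²(x, ξ̂) − z¹, ζ¹⟩` in `η`. The terms in which `z²` or `z¹` is
differentiated are `⟨z²_ξ ξ̂_η w, ζ²⟩` (as `ζ²(x, ξ̂) = ζ¹`) and `⟨z¹_η w, ζ¹⟩`, and both vanish
by the 1-form relations, leaving `∇_η φ = (ζ¹_η)ᵀ (z²(x, ξ̂) − z¹)`. Differentiating once more
at `x = x*`, where `z²(x*, ξ*) − z¹ = 0`, only the derivative of that difference survives, and
`ξ̂_η = (ζ²_ξ)⁻¹ ζ¹_η` is read off by differentiating the identity `ζ²(x, ξ̂) = ζ¹`.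
-/

theorem fderiv_dotProduct_apply {𝕜 E ι : Type*} [NontriviallyNormedField 𝕜]
    [NormedAddCommGroup E] [NormedSpace 𝕜 E] [Fintype ι] {f g : E → ι → 𝕜} {x : E}
    (hf : DifferentiableAt 𝕜 f x) (hg : DifferentiableAt 𝕜 g x) (v : E) :
    fderiv 𝕜 (fun y => f y ⬝ᵥ g y) x v = fderiv 𝕜 f x v ⬝ᵥ g x + f x ⬝ᵥ fderiv 𝕜 g x v := by
  have hfi := differentiableAt_pi.1 hf
  have hgi := differentiableAt_pi.1 hg
  simp only [dotProduct]
  rw [(HasFDerivAt.fun_sum (A := fun i y => f y i * g y i) fun i _ =>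
    (hfi i).hasFDerivAt.mul (hgi i).hasFDerivAt).fderiv, ← Finset.sum_add_distrib]
  simp [fderiv_apply hf, fderiv_apply hg, add_comm, mul_comm]

theorem Matrix.mulVec_single_one_dotProduct {m n R : Type*} [Fintype m] [Fintype n]
    [DecidableEq n] [CommSemiring R] (M N : Matrix m n R) (k l : n) :
    M *ᵥ Pi.single l 1 ⬝ᵥ N *ᵥ Pi.single k 1 = (Nᵀ * M) k l := by
  simp [mul_apply, dotProduct, mul_comm]

theorem jacCLM_apply {n : ℕ} (A B : Matrix (Fin n) (Fin n) ℝ) (u v : Fin n → ℝ) :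
    jacCLM A B (u, v) = A *ᵥ u + B *ᵥ v := rfl

theorem HasFDerivAt.comp_snd {E F G : Type*} [NormedAddCommGroup E] [NormedSpace ℝ E]
    [NormedAddCommGroup F] [NormedSpace ℝ F] [NormedAddCommGroup G] [NormedSpace ℝ G]
    {f : F → G} {f' : F →L[ℝ] G} {q : E × F} (hf : HasFDerivAt f f' q.2) :
    HasFDerivAt (fun r : E × F => f r.2) (f'.comp (ContinuousLinearMap.snd ℝ E F)) q :=
  hf.comp q hasFDerivAt_snd

theorem fderiv_comp_snd_apply {E F G : Type*} [NormedAddCommGroup E] [NormedSpace ℝ E]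
    [NormedAddCommGroup F] [NormedSpace ℝ F] [NormedAddCommGroup G] [NormedSpace ℝ G]
    {f : F → G} {f' : F →L[ℝ] G} {q : E × F} (hf : HasFDerivAt f f' q.2) (v : E × F) :
    fderiv ℝ (fun r : E × F => f r.2) q v = f' v.2 := by
  rw [hf.comp_snd.fderiv]
  rfl

theorem hasFDerivAt_comp_prodMk_fst {n : ℕ} {Y : Type*} [NormedAddCommGroup Y]
    [NormedSpace ℝ Y] {F : (Fin n → ℝ) × (Fin n → ℝ) → Fin n → ℝ}
    {A B : Matrix (Fin n) (Fin n) ℝ} {ξ : (Fin n → ℝ) × Y → Fin n → ℝ} {q : (Fin n → ℝ) × Y}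
    (hF : HasFDerivAt F (jacCLM A B) (q.1, ξ q)) (hξ : DifferentiableAt ℝ ξ q) :
    HasFDerivAt (fun r => F (r.1, ξ r)) ((jacCLM A B).comp
      ((ContinuousLinearMap.fst ℝ _ _).prod (fderiv ℝ ξ q))) q :=
  hF.comp q (hasFDerivAt_fst.prodMk hξ.hasFDerivAt)

theorem fderiv_comp_prodMk_fst_apply_inr {n : ℕ} {Y : Type*} [NormedAddCommGroup Y]
    [NormedSpace ℝ Y] {F : (Fin n → ℝ) × (Fin n → ℝ) → Fin n → ℝ} {A B : Matrix (Fin n) (Fin n) ℝ}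
    {ξ : (Fin n → ℝ) × Y → Fin n → ℝ} {q : (Fin n → ℝ) × Y}
    (hF : HasFDerivAt F (jacCLM A B) (q.1, ξ q)) (hξ : DifferentiableAt ℝ ξ q) (w : Y) :
    fderiv ℝ (fun r => F (r.1, ξ r)) q (0, w) = B *ᵥ fderiv ℝ ξ q (0, w) := by
  rw [(hasFDerivAt_comp_prodMk_fst hF hξ).fderiv]
  simp [jacCLM_apply]

theorem fderiv_apply_inr_of_comp_eventuallyEq {n : ℕ} {Y : Type*} [NormedAddCommGroup Y]
    [NormedSpace ℝ Y] {F : (Fin n → ℝ) × (Fin n → ℝ) → Fin n → ℝ} {A B : Matrix (Fin n) (Fin n) ℝ}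
    {ξ : (Fin n → ℝ) × Y → Fin n → ℝ} {g : Y → Fin n → ℝ} {g' : Y →L[ℝ] Fin n → ℝ}
    {q : (Fin n → ℝ) × Y} (hF : HasFDerivAt F (jacCLM A B) (q.1, ξ q))
    (hξ : DifferentiableAt ℝ ξ q) (hg : HasFDerivAt g g' q.2)
    (heq : (fun r => F (r.1, ξ r)) =ᶠ[nhds q] fun r => g r.2) (hB : IsUnit B) (w : Y) :
    fderiv ℝ ξ q (0, w) = B⁻¹ *ᵥ g' w := by
  have hBw : B *ᵥ fderiv ℝ ξ q (0, w) = g' w := by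
    rw [← fderiv_comp_prodMk_fst_apply_inr hF hξ, heq.fderiv_eq, fderiv_comp_snd_apply hg]
  rw [← hBw, mulVec_mulVec, nonsing_inv_mul _ ((isUnit_iff_isUnit_det B).mp hB), one_mulVec]

section CompositionPhase

variable {n : ℕ} {z1 z2 : (Fin n → ℝ) × (Fin n → ℝ) → Fin n → ℝ}
  {ξ : (Fin n → ℝ) × (Fin n → ℝ) × (Fin n → ℝ) → Fin n → ℝ}
  {q : (Fin n → ℝ) × (Fin n → ℝ) × (Fin n → ℝ)} {A1 B1 A2 B2 : Matrix (Fin n) (Fin n) ℝ}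

def phaseGap (z2 z1 : (Fin n → ℝ) × (Fin n → ℝ) → Fin n → ℝ)
    (ξ : (Fin n → ℝ) × (Fin n → ℝ) × (Fin n → ℝ) → Fin n → ℝ) :
    (Fin n → ℝ) × (Fin n → ℝ) × (Fin n → ℝ) → Fin n → ℝ :=
  fun r => z2 (r.1, ξ r) - z1 r.2

theorem differentiableAt_phaseGap (hz2 : HasFDerivAt z2 (jacCLM A2 B2) (q.1, ξ q))
    (hz1 : HasFDerivAt z1 (jacCLM A1 B1) q.2) (hξ : DifferentiableAt ℝ ξ q) :
    DifferentiableAt ℝ (phaseGap z2 z1 ξ) q :=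
  (hasFDerivAt_comp_prodMk_fst hz2 hξ).differentiableAt.sub
    hz1.comp_snd.differentiableAt

theorem fderiv_phaseGap_apply_eta (hz2 : HasFDerivAt z2 (jacCLM A2 B2) (q.1, ξ q))
    (hz1 : HasFDerivAt z1 (jacCLM A1 B1) q.2) (hξ : DifferentiableAt ℝ ξ q) (v : Fin n → ℝ) :
    fderiv ℝ (phaseGap z2 z1 ξ) q (0, 0, v) = B2 *ᵥ fderiv ℝ ξ q (0, 0, v) - B1 *ᵥ v := by
  unfold phaseGap
  rw [fderiv_fun_sub (hasFDerivAt_comp_prodMk_fst hz2 hξ).differentiableAt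
    hz1.comp_snd.differentiableAt, _root_.sub_apply,
    fderiv_comp_prodMk_fst_apply_inr hz2 hξ, fderiv_comp_snd_apply hz1]
  simp [jacCLM_apply]

theorem fderiv_phase_apply_eta {ζ1 : (Fin n → ℝ) × (Fin n → ℝ) → Fin n → ℝ}
    {C1 D1 : Matrix (Fin n) (Fin n) ℝ} (hz2 : HasFDerivAt z2 (jacCLM A2 B2) (q.1, ξ q))
    (hrel2 : B2ᵀ *ᵥ ζ1 q.2 = 0) (hz1 : HasFDerivAt z1 (jacCLM A1 B1) q.2)
    (hrel1 : B1ᵀ *ᵥ ζ1 q.2 = 0) (hζ1 : HasFDerivAt ζ1 (jacCLM C1 D1) q.2)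
    (hξ : DifferentiableAt ℝ ξ q) (v : Fin n → ℝ) :
    fderiv ℝ (fun r => phaseGap z2 z1 ξ r ⬝ᵥ ζ1 r.2) q (0, 0, v) =
      phaseGap z2 z1 ξ q ⬝ᵥ (D1 *ᵥ v) := by
  rw [fderiv_dotProduct_apply (differentiableAt_phaseGap hz2 hz1 hξ)
    hζ1.comp_snd.differentiableAt, fderiv_phaseGap_apply_eta hz2 hz1 hξ,
    fderiv_comp_snd_apply hζ1, sub_dotProduct, dotProduct_comm, dotProduct_mulVec,
    ← mulVec_transpose, hrel2, dotProduct_comm (B1 *ᵥ v), dotProduct_mulVec,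
    ← mulVec_transpose, hrel1]
  simp [jacCLM_apply]

theorem fderiv_phaseGap_dotProduct_apply_eta_of_eq
    {c : (Fin n → ℝ) × (Fin n → ℝ) × (Fin n → ℝ) → Fin n → ℝ} (hz2 : HasFDerivAt z2 (jacCLM A2 B2) (q.1, ξ q))
    (hz1 : HasFDerivAt z1 (jacCLM A1 B1) q.2) (hξ : DifferentiableAt ℝ ξ q)
    (hc : DifferentiableAt ℝ c q) (hz12 : z2 (q.1, ξ q) = z1 q.2) (v : Fin n → ℝ) :
    fderiv ℝ (fun r => phaseGap z2 z1 ξ r ⬝ᵥ c r) q (0, 0, v) =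
      (B2 *ᵥ fderiv ℝ ξ q (0, 0, v) - B1 *ᵥ v) ⬝ᵥ c q := by
  rw [fderiv_dotProduct_apply (differentiableAt_phaseGap hz2 hz1 hξ) hc,
    fderiv_phaseGap_apply_eta hz2 hz1 hξ, phaseGap, hz12, sub_self, zero_dotProduct, add_zero]

end CompositionPhase

theorem composition_phase_eta_derivatives_general (n : ℕ)
    (V U : Set ((Fin n → ℝ) × (Fin n → ℝ))) (hUopen : IsOpen U)
    (z2 ζ2 : (Fin n → ℝ) × (Fin n → ℝ) → Fin n → ℝ)
    (Z2x Z2ξ W2x W2ξ : (Fin n → ℝ) × (Fin n → ℝ) → Matrix (Fin n) (Fin n) ℝ)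
    (hdz2 : ∀ p ∈ V, HasFDerivAt z2 (jacCLM (Z2x p) (Z2ξ p)) p)
    (hdζ2 : ∀ p ∈ V, HasFDerivAt ζ2 (jacCLM (W2x p) (W2ξ p)) p)
    (hrel2 : ∀ p ∈ V, (Z2ξ p)ᵀ *ᵥ ζ2 p = 0)
    (z1 ζ1 : (Fin n → ℝ) × (Fin n → ℝ) → Fin n → ℝ)
    (hζ1 : ContDiffOn ℝ (⊤ : ℕ∞) ζ1 U)
    (Z1y Z1η W1y W1η : (Fin n → ℝ) × (Fin n → ℝ) → Matrix (Fin n) (Fin n) ℝ)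
    (hdz1 : ∀ p ∈ U, HasFDerivAt z1 (jacCLM (Z1y p) (Z1η p)) p)
    (hdζ1 : ∀ p ∈ U, HasFDerivAt ζ1 (jacCLM (W1y p) (W1η p)) p)
    (hrel1 : ∀ p ∈ U, (Z1η p)ᵀ *ᵥ ζ1 p = 0)
    (W : Set ((Fin n → ℝ) × ((Fin n → ℝ) × (Fin n → ℝ)))) (hWopen : IsOpen W)
    (hWU : ∀ q ∈ W, q.2 ∈ U)
    (ξhat : (Fin n → ℝ) × ((Fin n → ℝ) × (Fin n → ℝ)) → Fin n → ℝ)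
    (hξhat : ContDiffOn ℝ (⊤ : ℕ∞) ξhat W)
    (hmemV : ∀ q ∈ W, (q.1, ξhat q) ∈ V)
    (hζeq : ∀ q ∈ W, ζ2 (q.1, ξhat q) = ζ1 q.2)
    (xs ξs : (Fin n → ℝ) × (Fin n → ℝ) → Fin n → ℝ)
    (hmemW : ∀ p ∈ U, (xs p, p) ∈ W)
    (hξhs : ∀ p ∈ U, ξhat (xs p, p) = ξs p)
    (hz12 : ∀ p ∈ U, z2 (xs p, ξs p) = z1 p)
    (hinv : ∀ p ∈ U, IsUnit (W2ξ (xs p, ξs p)))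
    (φ : (Fin n → ℝ) × ((Fin n → ℝ) × (Fin n → ℝ)) → ℝ)
    (hφdef : ∀ q, φ q = (z2 (q.1, ξhat q) - z1 q.2) ⬝ᵥ ζ1 q.2) :
    (∀ q ∈ W, ∀ k : Fin n,
      fderiv ℝ φ q (0, 0, Pi.single k 1) =
        ((W1η q.2)ᵀ *ᵥ (z2 (q.1, ξhat q) - z1 q.2)) k) ∧
    (∀ p ∈ U, ∀ k l : Fin n,
      fderiv ℝ (fun r => fderiv ℝ φ r (0, 0, Pi.single k 1)) (xs p, p) (0, 0, Pi.single l 1) =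
        ((W1η p)ᵀ *
          (Z2ξ (xs p, ξs p) * (W2ξ (xs p, ξs p))⁻¹ * W1η p - Z1η p)) k l) := by
  have hξd : ∀ q ∈ W, DifferentiableAt ℝ ξhat q := fun q hq =>
    (hξhat.contDiffAt (hWopen.mem_nhds hq)).differentiableAt (by simp)
  have grad : ∀ q ∈ W, ∀ u, fderiv ℝ φ q (0, 0, u) = phaseGap z2 z1 ξhat q ⬝ᵥ (W1η q.2 *ᵥ u) :=
    fun q hq u => by
      rw [show φ = fun r => phaseGap z2 z1 ξhat r ⬝ᵥ ζ1 r.2 from funext hφdef]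
      exact fderiv_phase_apply_eta (hdz2 _ (hmemV q hq)) (hζeq q hq ▸ hrel2 _ (hmemV q hq))
        (hdz1 _ (hWU q hq)) (hrel1 _ (hWU q hq)) (hdζ1 _ (hWU q hq)) (hξd q hq) u
  refine ⟨fun q hq k => by simp [grad q hq, phaseGap, mulVec_transpose, vecMul, dotProduct], ?_⟩
  intro p hp k l
  have hpW := hmemW p hp
  rw [← hξhs p hp]
  have hgrad : (fun r => fderiv ℝ φ r (0, 0, Pi.single k 1)) =ᶠ[nhds (xs p, p)]
      fun r => phaseGap z2 z1 ξhat r ⬝ᵥ fderiv ℝ ζ1 r.2 (0, Pi.single k 1) :=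
    Filter.eventuallyEq_of_mem (hWopen.mem_nhds hpW) fun r hr => by
      simp [grad r hr, (hdζ1 _ (hWU r hr)).fderiv, jacCLM_apply]
  have hc : DifferentiableAt ℝ (fun r : (Fin n → ℝ) × _ => fderiv ℝ ζ1 r.2 (0, Pi.single k 1))
      (xs p, p) :=
    have hDζ1 := (hζ1.contDiffAt (hUopen.mem_nhds hp)).fderiv_right (m := 1) (by norm_cast)
    ((hDζ1.differentiableAt one_ne_zero).comp _ differentiableAt_snd).clm_apply
      (differentiableAt_const _)
  rw [hgrad.fderiv_eq, fderiv_phaseGap_dotProduct_apply_eta_of_eq (hdz2 _ (hmemV _ hpW))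
      (hdz1 p hp) (hξd _ hpW) hc (by rw [hξhs p hp, hz12 p hp]),
    fderiv_apply_inr_of_comp_eventuallyEq (hdζ2 _ (hmemV _ hpW)) (hξd _ hpW) (hdζ1 p hp)
      (Filter.eventuallyEq_of_mem (hWopen.mem_nhds hpW) hζeq) (hξhs p hp ▸ hinv p hp)]
  simp only [(hdζ1 p hp).fderiv, jacCLM_apply, mulVec_zero, zero_add]
  rw [mulVec_mulVec, mulVec_mulVec, ← sub_mulVec, mulVec_single_one_dotProduct]

/-- With `Φ₁ : (y,η) ↦ (z¹,ζ¹)` and `Φ₂ : (x,ξ) ↦ (z²,ζ²)` preserving the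
1-form (`(z¹_η)ᵀζ¹ = 0` on `U`, `(z²_ξ)ᵀζ² = 0` on `V`), `ξ̂` solving `ζ²(x,ξ̂) = ζ¹`,
`ξ̂(x*;y,η) = ξ*`, `z²(x*,ξ*) = z¹`, and `ζ²_ξ` invertible along `(x*,ξ*)`, the composition
phase `φ(x;y,η) = ⟨z²(x, ξ̂(x;y,η)) − z¹(y,η), ζ¹(y,η)⟩` satisfies
`∇_η φ = (ζ¹_η)ᵀ (z²(x,ξ̂) − z¹)` on `W` and, at `x = x*(y,η)`,
`φ_{ηη}(x*;y,η) = (ζ¹_η)ᵀ (z²_ξ (ζ²_ξ)⁻¹ ζ¹_η − z¹_η)`. -/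
theorem composition_phase_eta_derivatives (n : ℕ)
    (V U : Set ((Fin n → ℝ) × (Fin n → ℝ))) (hVopen : IsOpen V) (hUopen : IsOpen U)
    (z2 ζ2 : (Fin n → ℝ) × (Fin n → ℝ) → Fin n → ℝ)
    (hz2 : ContDiffOn ℝ (⊤ : ℕ∞) z2 V) (hζ2 : ContDiffOn ℝ (⊤ : ℕ∞) ζ2 V)
    (Z2x Z2ξ W2x W2ξ : (Fin n → ℝ) × (Fin n → ℝ) → Matrix (Fin n) (Fin n) ℝ)
    (hdz2 : ∀ p ∈ V, HasFDerivAt z2 (jacCLM (Z2x p) (Z2ξ p)) p)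
    (hdζ2 : ∀ p ∈ V, HasFDerivAt ζ2 (jacCLM (W2x p) (W2ξ p)) p)
    (hrel2 : ∀ p ∈ V, (Z2ξ p)ᵀ *ᵥ ζ2 p = 0)
    (z1 ζ1 : (Fin n → ℝ) × (Fin n → ℝ) → Fin n → ℝ)
    (hz1 : ContDiffOn ℝ (⊤ : ℕ∞) z1 U) (hζ1 : ContDiffOn ℝ (⊤ : ℕ∞) ζ1 U)
    (Z1y Z1η W1y W1η : (Fin n → ℝ) × (Fin n → ℝ) → Matrix (Fin n) (Fin n) ℝ)
    (hdz1 : ∀ p ∈ U, HasFDerivAt z1 (jacCLM (Z1y p) (Z1η p)) p)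
    (hdζ1 : ∀ p ∈ U, HasFDerivAt ζ1 (jacCLM (W1y p) (W1η p)) p)
    (hrel1 : ∀ p ∈ U, (Z1η p)ᵀ *ᵥ ζ1 p = 0)
    (W : Set ((Fin n → ℝ) × ((Fin n → ℝ) × (Fin n → ℝ)))) (hWopen : IsOpen W)
    (hWU : ∀ q ∈ W, q.2 ∈ U)
    (ξhat : (Fin n → ℝ) × ((Fin n → ℝ) × (Fin n → ℝ)) → Fin n → ℝ)
    (hξhat : ContDiffOn ℝ (⊤ : ℕ∞) ξhat W)
    (hmemV : ∀ q ∈ W, (q.1, ξhat q) ∈ V)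
    (hζeq : ∀ q ∈ W, ζ2 (q.1, ξhat q) = ζ1 q.2)
    (xs ξs : (Fin n → ℝ) × (Fin n → ℝ) → Fin n → ℝ)
    (hxss : ContDiffOn ℝ (⊤ : ℕ∞) xs U) (hξss : ContDiffOn ℝ (⊤ : ℕ∞) ξs U)
    (hmemW : ∀ p ∈ U, (xs p, p) ∈ W)
    (hmemVs : ∀ p ∈ U, (xs p, ξs p) ∈ V)
    (hξhs : ∀ p ∈ U, ξhat (xs p, p) = ξs p)
    (hz12 : ∀ p ∈ U, z2 (xs p, ξs p) = z1 p)
    (hinv : ∀ p ∈ U, IsUnit (W2ξ (xs p, ξs p)))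
    (φ : (Fin n → ℝ) × ((Fin n → ℝ) × (Fin n → ℝ)) → ℝ)
    (hφdef : ∀ q, φ q = (z2 (q.1, ξhat q) - z1 q.2) ⬝ᵥ ζ1 q.2) :
    (∀ q ∈ W, ∀ k : Fin n,
      fderiv ℝ φ q (0, 0, Pi.single k 1) =
        ((W1η q.2)ᵀ *ᵥ (z2 (q.1, ξhat q) - z1 q.2)) k) ∧
    (∀ p ∈ U, ∀ k l : Fin n,
      fderiv ℝ (fun r => fderiv ℝ φ r (0, 0, Pi.single k 1)) (xs p, p) (0, 0, Pi.single l 1) =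
        ((W1η p)ᵀ *
          (Z2ξ (xs p, ξs p) * (W2ξ (xs p, ξs p))⁻¹ * W1η p - Z1η p)) k l) :=
  composition_phase_eta_derivatives_general n V U hUopen z2 ζ2 Z2x Z2ξ W2x W2ξ hdz2 hdζ2 hrel2 z1 ζ1
    hζ1 Z1y Z1η W1y W1η hdz1 hdζ1 hrel1 W hWopen hWU ξhat hξhat hmemV hζeq xs ξs hmemW hξhs hz12
    hinv φ hφdef
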